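/- Let L = U^{⊕3} ⊕ [−2]^{⊕2} and let φ ∈ O(L) act on the diagonal sum as: −id on the first U summand, the swap (e,f) ↦ (f,e) on the second U summand, −(swap) on the third U summand (i.e. (e,f) ↦ (−f,−e)), and the swap of the two [−2] generators. Then φ has order 2, the invariant lattice L^φ is isometric to [2] ⊕ [−2] ⊕ [−4], the coinvariant lattice L_φ is isometric to U ⊕ [2] ⊕ [−2] ⊕ [−4], and φ acts nontrivially on the discriminant group L*/L ≅ (Z/2Z)². -/
import Mathlib


/-- The Gram matrix of `L = U⊕U⊕U⊕[−2]⊕[−2]` in the standard basis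
`e₁,f₁,e₂,f₂,e₃,f₃,x₁,x₂`. -/
def LGram : Matrix (Fin 8) (Fin 8) ℤ :=
  !![0,1,0,0,0,0,0,0;
     1,0,0,0,0,0,0,0;
     0,0,0,1,0,0,0,0;
     0,0,1,0,0,0,0,0;
     0,0,0,0,0,1,0,0;
     0,0,0,0,1,0,0,0;
     0,0,0,0,0,0,-2,0;
     0,0,0,0,0,0,0,-2]

/-- The bilinear form of `L`. -/
noncomputable def BL : LinearMap.BilinForm ℤ (Fin 8 → ℤ) := Matrix.toLinearMap₂' ℤ LGram

/-- The matrix of the isometry `φ`: `−id` on the first `U`, the swap `σ` on the second `U`,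
`−σ` on the third `U`, and the swap of the two `[−2]` generators. -/
def P : Matrix (Fin 8) (Fin 8) ℤ :=
  !![-1, 0, 0, 0, 0, 0, 0, 0;
      0,-1, 0, 0, 0, 0, 0, 0;
      0, 0, 0, 1, 0, 0, 0, 0;
      0, 0, 1, 0, 0, 0, 0, 0;
      0, 0, 0, 0, 0,-1, 0, 0;
      0, 0, 0, 0,-1, 0, 0, 0;
      0, 0, 0, 0, 0, 0, 0, 1;
      0, 0, 0, 0, 0, 0, 1, 0]

/-- Gram matrix of `[2] ⊕ [−2] ⊕ [−4]`. -/
def TGram : Matrix (Fin 3) (Fin 3) ℤ := !![2,0,0; 0,-2,0; 0,0,-4]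

/-- Gram matrix of `U ⊕ [2] ⊕ [−2] ⊕ [−4]`. -/
def SGram : Matrix (Fin 5) (Fin 5) ℤ :=
  !![0,1,0,0,0;
     1,0,0,0,0;
     0,0,2,0,0;
     0,0,0,-2,0;
     0,0,0,0,-4]

@[simp] lemma vec8_0 {α : Type*} (a0 a1 a2 a3 a4 a5 a6 a7 : α) : ![a0,a1,a2,a3,a4,a5,a6,a7] 0 = a0 := rfl
@[simp] lemma vec8_1 {α : Type*} (a0 a1 a2 a3 a4 a5 a6 a7 : α) : ![a0,a1,a2,a3,a4,a5,a6,a7] 1 = a1 := rfl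
@[simp] lemma vec8_2 {α : Type*} (a0 a1 a2 a3 a4 a5 a6 a7 : α) : ![a0,a1,a2,a3,a4,a5,a6,a7] 2 = a2 := rfl
@[simp] lemma vec8_3 {α : Type*} (a0 a1 a2 a3 a4 a5 a6 a7 : α) : ![a0,a1,a2,a3,a4,a5,a6,a7] 3 = a3 := rfl
@[simp] lemma vec8_4 {α : Type*} (a0 a1 a2 a3 a4 a5 a6 a7 : α) : ![a0,a1,a2,a3,a4,a5,a6,a7] 4 = a4 := rfl
@[simp] lemma vec8_5 {α : Type*} (a0 a1 a2 a3 a4 a5 a6 a7 : α) : ![a0,a1,a2,a3,a4,a5,a6,a7] 5 = a5 := rfl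
@[simp] lemma vec8_6 {α : Type*} (a0 a1 a2 a3 a4 a5 a6 a7 : α) : ![a0,a1,a2,a3,a4,a5,a6,a7] 6 = a6 := rfl
@[simp] lemma vec8_7 {α : Type*} (a0 a1 a2 a3 a4 a5 a6 a7 : α) : ![a0,a1,a2,a3,a4,a5,a6,a7] 7 = a7 := rfl
@[simp] lemma vec5_0 {α : Type*} (a0 a1 a2 a3 a4 : α) : ![a0,a1,a2,a3,a4] 0 = a0 := rfl
@[simp] lemma vec5_1 {α : Type*} (a0 a1 a2 a3 a4 : α) : ![a0,a1,a2,a3,a4] 1 = a1 := rfl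
@[simp] lemma vec5_2 {α : Type*} (a0 a1 a2 a3 a4 : α) : ![a0,a1,a2,a3,a4] 2 = a2 := rfl
@[simp] lemma vec5_3 {α : Type*} (a0 a1 a2 a3 a4 : α) : ![a0,a1,a2,a3,a4] 3 = a3 := rfl
@[simp] lemma vec5_4 {α : Type*} (a0 a1 a2 a3 a4 : α) : ![a0,a1,a2,a3,a4] 4 = a4 := rfl
@[simp] lemma vec3_0 {α : Type*} (a0 a1 a2 : α) : ![a0,a1,a2] 0 = a0 := rfl
@[simp] lemma vec3_1 {α : Type*} (a0 a1 a2 : α) : ![a0,a1,a2] 1 = a1 := rfl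
@[simp] lemma vec3_2 {α : Type*} (a0 a1 a2 : α) : ![a0,a1,a2] 2 = a2 := rfl

lemma memker1 (x : Fin 8 → ℤ) :
    x ∈ LinearMap.ker (Matrix.toLin' P - LinearMap.id) ↔
      (x 0 = 0 ∧ x 1 = 0 ∧ x 3 = x 2 ∧ x 5 = -x 4 ∧ x 7 = x 6) := by
  rw [LinearMap.mem_ker]
  constructor
  · intro h
    have h0 := congrFun h 0
    have h1 := congrFun h 1
    have h2 := congrFun h 2
    have h4 := congrFun h 4
    have h6 := congrFun h 6
    simp [Matrix.toLin'_apply, Matrix.mulVec, dotProduct, Fin.sum_univ_eight, P]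
      at h0 h1 h2 h4 h6
    refine ⟨?_, ?_, ?_, ?_, ?_⟩ <;> omega
  · rintro ⟨h0, h1, h3, h5, h7⟩
    funext i
    fin_cases i <;>
      simp [Matrix.toLin'_apply, Matrix.mulVec, dotProduct, Fin.sum_univ_eight, P] <;>
      omega

lemma memker2 (x : Fin 8 → ℤ) :
    x ∈ LinearMap.ker (Matrix.toLin' P + LinearMap.id) ↔
      (x 3 = -x 2 ∧ x 5 = x 4 ∧ x 7 = -x 6) := by
  rw [LinearMap.mem_ker]
  constructor
  · intro h
    have h2 := congrFun h 2
    have h4 := congrFun h 4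
    have h6 := congrFun h 6
    simp [Matrix.toLin'_apply, Matrix.mulVec, dotProduct, Fin.sum_univ_eight, P]
      at h2 h4 h6
    refine ⟨?_, ?_, ?_⟩ <;> omega
  · rintro ⟨h3, h5, h7⟩
    funext i
    fin_cases i <;>
      simp [Matrix.toLin'_apply, Matrix.mulVec, dotProduct, Fin.sum_univ_eight, P] <;>
      omega

noncomputable def equivInv : LinearMap.ker (Matrix.toLin' P - LinearMap.id) ≃ₗ[ℤ] (Fin 3 → ℤ) where
  toFun x := fun i => (x : Fin 8 → ℤ) (![2, 4, 6] i)
  map_add' x y := rfl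
  map_smul' c x := rfl
  invFun c := ⟨![0, 0, c 0, c 0, c 1, -c 1, c 2, c 2], by rw [memker1]; simp⟩
  left_inv x := by
    obtain ⟨h0, h1, h3, h5, h7⟩ := (memker1 x.1).mp x.2
    apply Subtype.ext
    funext i
    fin_cases i <;> simp <;> omega
  right_inv c := by
    funext i
    fin_cases i <;> simp

noncomputable def equivCoinv : LinearMap.ker (Matrix.toLin' P + LinearMap.id) ≃ₗ[ℤ] (Fin 5 → ℤ) where
  toFun x := fun i => (x : Fin 8 → ℤ) (![0, 1, 4, 2, 6] i)
  map_add' x y := rfl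
  map_smul' c x := rfl
  invFun c := ⟨![c 0, c 1, c 3, -c 3, c 2, c 2, c 4, -c 4], by rw [memker2]; simp⟩
  left_inv x := by
    obtain ⟨h3, h5, h7⟩ := (memker2 x.1).mp x.2
    apply Subtype.ext
    funext i
    fin_cases i <;> simp <;> omega
  right_inv c := by
    funext i
    fin_cases i <;> simp

lemma equivInv_apply (x : LinearMap.ker (Matrix.toLin' P - LinearMap.id)) (i : Fin 3) :
    equivInv x i = (x : Fin 8 → ℤ) (![2, 4, 6] i) := rfl

lemma equivCoinv_apply (x : LinearMap.ker (Matrix.toLin' P + LinearMap.id)) (i : Fin 5) :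
    equivCoinv x i = (x : Fin 8 → ℤ) (![0, 1, 4, 2, 6] i) := rfl


/-- The map `φ` given by the matrix `P` is an isometry of
`L = U^{⊕3} ⊕ [−2]^{⊕2}` of order 2, its invariant lattice `L^φ = Ker(φ − id)` is
isometric to `[2] ⊕ [−2] ⊕ [−4]`, its coinvariant lattice `L_φ = Ker(φ + id)` is
isometric to `U ⊕ [2] ⊕ [−2] ⊕ [−4]`, and `φ` acts nontrivially on the discriminant
group `L*/L ≅ (ℤ/2ℤ)²`. -/
theorem stmt19 :
    -- `φ` is an isometry of order 2:
    (∀ x y : Fin 8 → ℤ, BL (Matrix.toLin' P x) (Matrix.toLin' P y) = BL x y) ∧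
    P * P = 1 ∧ P ≠ 1 ∧
    -- the invariant lattice is `[2] ⊕ [−2] ⊕ [−4]`:
    (∃ e : LinearMap.ker (Matrix.toLin' P - LinearMap.id) ≃ₗ[ℤ] (Fin 3 → ℤ),
      ∀ x y : LinearMap.ker (Matrix.toLin' P - LinearMap.id),
        BL x y = Matrix.toLinearMap₂' ℤ TGram (e x) (e y)) ∧
    -- the coinvariant lattice is `U ⊕ [2] ⊕ [−2] ⊕ [−4]`:
    (∃ e : LinearMap.ker (Matrix.toLin' P + LinearMap.id) ≃ₗ[ℤ] (Fin 5 → ℤ),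
      ∀ x y : LinearMap.ker (Matrix.toLin' P + LinearMap.id),
        BL x y = Matrix.toLinearMap₂' ℤ SGram (e x) (e y)) ∧
    -- `φ` acts nontrivially on the discriminant group:
    ¬ ∀ f : Module.Dual ℤ (Fin 8 → ℤ),
        f ∘ₗ Matrix.toLin' P - f ∈ LinearMap.range BL := by
  refine ⟨?_, ?_, ?_, ?_, ?_, ?_⟩
  · intro x y
    have key : LinearMap.compl₁₂ (Matrix.toLinearMap₂' ℤ LGram)
        (Matrix.toLin' P) (Matrix.toLin' P) = Matrix.toLinearMap₂' ℤ LGram := by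
      rw [Matrix.toLinearMap₂'_comp]
      congr 1
      decide
    have h := DFunLike.congr_fun (DFunLike.congr_fun key x) y
    simpa [BL, LinearMap.compl₁₂_apply] using h
  · decide
  · intro h
    have := congrFun (congrFun h 0) 0
    simp [P, Matrix.one_apply] at this
  · refine ⟨equivInv, fun x y => ?_⟩
    obtain ⟨hx0, hx1, hx3, hx5, hx7⟩ := (memker1 x.1).mp x.2
    obtain ⟨hy0, hy1, hy3, hy5, hy7⟩ := (memker1 y.1).mp y.2
    show Matrix.toLinearMap₂' ℤ LGram _ _ = _
    rw [Matrix.toLinearMap₂'_apply', Matrix.toLinearMap₂'_apply']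
    simp only [Matrix.mulVec, dotProduct, Fin.sum_univ_eight, Fin.sum_univ_three,
      LGram, TGram, Matrix.of_apply, equivInv_apply,
      vec8_0, vec8_1, vec8_2, vec8_3, vec8_4, vec8_5, vec8_6, vec8_7,
      vec3_0, vec3_1, vec3_2,
      zero_mul, mul_zero, one_mul, mul_one, add_zero, zero_add, neg_mul, mul_neg,
      hx0, hx1, hx3, hx5, hx7, hy0, hy1, hy3, hy5, hy7]
    ring
  · refine ⟨equivCoinv, fun x y => ?_⟩
    obtain ⟨hx3, hx5, hx7⟩ := (memker2 x.1).mp x.2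
    obtain ⟨hy3, hy5, hy7⟩ := (memker2 y.1).mp y.2
    show Matrix.toLinearMap₂' ℤ LGram _ _ = _
    rw [Matrix.toLinearMap₂'_apply', Matrix.toLinearMap₂'_apply']
    simp only [Matrix.mulVec, dotProduct, Fin.sum_univ_eight, Fin.sum_univ_five,
      LGram, SGram, Matrix.of_apply, equivCoinv_apply,
      vec8_0, vec8_1, vec8_2, vec8_3, vec8_4, vec8_5, vec8_6, vec8_7,
      vec5_0, vec5_1, vec5_2, vec5_3, vec5_4,
      zero_mul, mul_zero, one_mul, mul_one, add_zero, zero_add, neg_mul, mul_neg,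
      hx3, hx5, hx7, hy3, hy5, hy7]
    ring
  · intro h
    obtain ⟨v, hv⟩ := h (LinearMap.proj 6)
    have h6 := DFunLike.congr_fun hv ![0, 0, 0, 0, 0, 0, 1, 0]
    rw [show BL = Matrix.toLinearMap₂' ℤ LGram from rfl, Matrix.toLinearMap₂'_apply'] at h6
    simp only [Matrix.mulVec, dotProduct, Fin.sum_univ_eight, LGram, P,
      Matrix.of_apply, Matrix.toLin'_apply, LinearMap.sub_apply, LinearMap.coe_comp,
      Function.comp_apply, LinearMap.proj_apply, Pi.sub_apply,
      vec8_0, vec8_1, vec8_2, vec8_3, vec8_4, vec8_5, vec8_6, vec8_7,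
      zero_mul, mul_zero, one_mul, mul_one, add_zero, zero_add, neg_mul, mul_neg] at h6
    omega
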